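/- arXiv:1205.5859 — 3 statements merged into one kernel-verified Lean document; each statement's English description precedes it below -/
import Mathlib

section
/- Let Γ be a finite connected graph with adjacency matrix A and let u be a vertex whose set of distinct local eigenvalues (eigenvalues λ with E_λ e_u ≠ 0) has size d_u + 1. Then the eccentricity of u satisfies ε_u ≤ d_u. -/
/-!
Write `e_u = ∑ᵢ E i e_u`; only the `d_u + 1` local eigenvalues contribute, so
`A ^ k e_u = p(A) e_u` for the Lagrange interpolant `p` of `X ^ k` at the local eigenvalues, which has degree at most
`d_u`. If some `v` had `dist u v > d_u`, then with `k = dist u v` the `v`-entry of the left side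
counts the shortest walks and is positive, while that of the right side vanishes since
`(A ^ j) v u = 0` for `j < dist u v`.
-/

open Matrix Finset Polynomial

theorem Polynomial.aeval_mul_eq_eval_smul_of_mul_eq_smul {R A : Type*} [CommSemiring R]
    [Semiring A] [Algebra R A] {a e : A} {μ : R} (h : a * e = μ • e) (p : R[X]) :
    aeval a p * e = p.eval μ • e := by
  have hpow (k : ℕ) : a ^ k * e = μ ^ k • e := by
    induction k with
    | zero => simp
    | succ k ih => rw [pow_succ, mul_assoc, h, mul_smul_comm, ih, smul_smul, pow_succ']
  induction p using Polynomial.induction_on' with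
  | add p q hp hq => rw [map_add, add_mul, hp, hq, eval_add, add_smul]
  | monomial k c =>
    rw [aeval_monomial, eval_monomial, mul_assoc, hpow, ← Algebra.smul_def, smul_smul]

section SpectralDecomposition

variable {ι n : Type*} [Fintype ι] [Fintype n] [DecidableEq n]

theorem Matrix.aeval_mulVec_eq_sum_eval_smul {K : Type*} [CommSemiring K] {A : Matrix n n K}
    {lam : ι → K} {E : ι → Matrix n n K} (hsum : ∑ i, E i = 1)
    (hAE : ∀ i, A * E i = lam i • E i) (p : K[X]) (x : n → K) :
    aeval A p *ᵥ x = ∑ i, p.eval (lam i) • (E i *ᵥ x) := by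
  calc aeval A p *ᵥ x = (∑ i, aeval A p * E i) *ᵥ x := by rw [← mul_sum, hsum, mul_one]
    _ = ∑ i, p.eval (lam i) • (E i *ᵥ x) := by
      simp only [sum_mulVec, aeval_mul_eq_eval_smul_of_mul_eq_smul (hAE _), smul_mulVec]

theorem Matrix.exists_degree_lt_aeval_mulVec_eq_pow_mulVec {K : Type*} [Field K] [DecidableEq K]
    [DecidableEq ι] {A : Matrix n n K} {lam : ι → K} {E : ι → Matrix n n K}
    (hsum : ∑ i, E i = 1) (hAE : ∀ i, A * E i = lam i • E i) (x : n → K)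
    (hlam : Set.InjOn lam {i | E i *ᵥ x ≠ 0}) (k : ℕ) :
    ∃ p : K[X], p.degree < #{i | E i *ᵥ x ≠ 0} ∧ aeval A p *ᵥ x = (A ^ k) *ᵥ x := by
  set S : Finset ι := {i | E i *ᵥ x ≠ 0}
  have hS : Set.InjOn lam S := by simpa [S] using hlam
  refine ⟨Lagrange.interpolate S lam (fun i => lam i ^ k),
    Lagrange.degree_interpolate_lt _ hS, ?_⟩
  have hpow : A ^ k = aeval A ((X : K[X]) ^ k) := by rw [map_pow, aeval_X]
  rw [hpow, aeval_mulVec_eq_sum_eval_smul hsum hAE, aeval_mulVec_eq_sum_eval_smul hsum hAE]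
  refine sum_congr rfl fun i _ => ?_
  by_cases hi : i ∈ S
  · rw [Lagrange.eval_interpolate_at_node _ hS hi, eval_pow, eval_X]
  · simp_all [S]

end SpectralDecomposition

namespace SimpleGraph

variable {V R : Type*} [Fintype V] [DecidableEq V] (G : SimpleGraph V) [DecidableRel G.Adj]

theorem adjMatrix_pow_apply_eq_zero_of_lt_dist [Semiring R] {k : ℕ} {u v : V}
    (hk : k < G.dist u v) : (G.adjMatrix R ^ k) u v = 0 := by
  have : IsEmpty {w : G.Walk u v | w.length = k} :=
    ⟨fun ⟨w, hw⟩ => (hw ▸ hk).not_ge (dist_le w)⟩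
  rw [adjMatrix_pow_apply_eq_card_walk, Fintype.card_eq_zero, Nat.cast_zero]

theorem adjMatrix_pow_dist_apply_ne_zero [Semiring R] [CharZero R] {u v : V}
    (h : G.Reachable u v) : (G.adjMatrix R ^ G.dist u v) u v ≠ 0 := by
  rw [adjMatrix_pow_apply_eq_card_walk, Nat.cast_ne_zero, ← Nat.pos_iff_ne_zero,
    Fintype.card_pos_iff]
  obtain ⟨w, hw⟩ := h.exists_walk_length_eq_dist
  exact ⟨⟨w, hw⟩⟩

theorem aeval_adjMatrix_apply_eq_zero_of_degree_lt [CommSemiring R] {p : R[X]} {u v : V}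
    (hp : p.degree < G.dist u v) : aeval (G.adjMatrix R) p u v = 0 := by
  rw [aeval_eq_sum_range, Matrix.sum_apply]
  refine sum_eq_zero fun k _ => ?_
  rcases lt_or_ge k (G.dist u v) with hk | hk
  · rw [Matrix.smul_apply, adjMatrix_pow_apply_eq_zero_of_lt_dist G hk, smul_zero]
  · rw [coeff_eq_zero_of_degree_lt (hp.trans_le (by exact_mod_cast hk)), zero_smul,
      Matrix.zero_apply]

end SimpleGraph

theorem eccentricity_le_num_local_eigenvalues_general
    (n d : ℕ) (G : SimpleGraph (Fin n)) [DecidableRel G.Adj]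
    (hconn : G.Connected)
    (lam : Fin (d + 1) → ℝ) (hlam : StrictAnti lam)
    (E : Fin (d + 1) → Matrix (Fin n) (Fin n) ℝ)
    (hsum : ∑ i, E i = 1)
    (hAE : ∀ i, G.adjMatrix ℝ * E i = lam i • E i)
    (u : Fin n) (du : ℕ)
    (hdu : (Finset.univ.filter
        (fun i => (E i).mulVec (Pi.single u 1) ≠ 0)).card = du + 1) :
    ∀ v : Fin n, G.dist u v ≤ du := by
  intro v
  by_contra! hlt
  obtain ⟨p, hdeg, hp⟩ := exists_degree_lt_aeval_mulVec_eq_pow_mulVec hsum hAE (Pi.single u 1)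
    hlam.injective.injOn (G.dist v u)
  rw [hdu] at hdeg
  have hpv : aeval (G.adjMatrix ℝ) p v u = 0 :=
    G.aeval_adjMatrix_apply_eq_zero_of_degree_lt
      (hdeg.trans_le (by rw [G.dist_comm]; exact_mod_cast hlt))
  apply G.adjMatrix_pow_dist_apply_ne_zero (R := ℝ) (hconn v u)
  simpa [mulVec_single_one, hpv] using (congrFun hp v).symm

theorem eccentricity_le_num_local_eigenvalues
    (n d : ℕ) (G : SimpleGraph (Fin n)) [DecidableRel G.Adj]
    (hconn : G.Connected)
    (lam : Fin (d + 1) → ℝ) (hlam : StrictAnti lam)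
    (E : Fin (d + 1) → Matrix (Fin n) (Fin n) ℝ)
    (hsum : ∑ i, E i = 1)
    (hsym : ∀ i, (E i).IsSymm)
    (horth : ∀ i j, E i * E j = if i = j then E i else 0)
    (hAE : ∀ i, G.adjMatrix ℝ * E i = lam i • E i)
    (u : Fin n) (du : ℕ)
    (hdu : (Finset.univ.filter
        (fun i => (E i).mulVec (Pi.single u 1) ≠ 0)).card = du + 1) :
    ∀ v : Fin n, G.dist u v ≤ du :=
  eccentricity_le_num_local_eigenvalues_general n d G hconn lam hlam E hsum hAE u du hdu
end

section
/- Let Γ be a finite connected graph with adjacency matrix A and Perron vector α (Aα = λ_0 α, α > 0, ‖α‖² = n). Suppose a polynomial q satisfies q(A) = S*_j, where S*_j is the matrix with (S*_j)_{uv} = α_u α_v if dist(u,v) ≤ j and 0 otherwise. Then q(λ_0) equals the harmonic mean of the numbers (1/α_u²)·Σ_{v: dist(u,v) ≤ j} α_v² over u ∈ V. -/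
/-!
Applying `q(A) = S*_j` to the Perron vector `α` gives `q(λ₀) α_u = α_u ∑_{dist(u,v) ≤ j} α_v²`,
so every ball sum `∑_{dist(u,v) ≤ j} α_v²` equals `q(λ₀)`. A weighted harmonic mean of a constant
is that constant, and the weights `α_u²` sum to `n`.
-/

open Matrix Finset Polynomial

namespace Matrix

variable {ι R : Type*} [Fintype ι]

theorem aeval_mulVec_of_mulVec_eq_smul [DecidableEq ι] [CommRing R] {A : Matrix ι ι R} {μ : R}
    {x : ι → R} (h : A *ᵥ x = μ • x) (p : R[X]) : aeval A p *ᵥ x = p.eval μ • x := by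
  have := Module.End.aeval_apply_of_mem_apply_eq_smul (f := toLinAlgEquiv' A) (p := p)
    (by rwa [toLinAlgEquiv'_apply])
  rwa [← toLinAlgEquiv'_apply, ← Polynomial.aeval_algHom_apply]

theorem of_ite_mul_mulVec [CommSemiring R] (P : ι → ι → Prop) [DecidableRel P] (a : ι → R) :
    of (fun u v => if P u v then a u * a v else 0) *ᵥ a
      = fun u => a u * ∑ v, if P u v then a v ^ 2 else 0 := by
  ext u
  simp only [mulVec, dotProduct, of_apply, mul_sum, ite_mul, zero_mul, mul_ite, mul_zero]
  exact sum_congr rfl fun v _ => by ring_nf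

end Matrix

theorem sum_div_sum_inv_inv_mul_const {ι K : Type*} [Fintype ι] [Field K] (w : ι → K) (m : K)
    (hw : ∑ u, w u ≠ 0) : (∑ u, w u) / ∑ u, ((w u)⁻¹ * m)⁻¹ = m := by
  simp only [mul_inv, inv_inv, ← sum_mul]
  rw [div_mul_eq_div_div, div_self hw, one_div, inv_inv]

theorem equality_case_harmonic_mean
    (n : ℕ) (G : SimpleGraph (Fin n)) [DecidableRel G.Adj]
    (hconn : G.Connected)
    (lam0 : ℝ) (alpha : Fin n → ℝ) (hpos : ∀ u, 0 < alpha u)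
    (heig : (G.adjMatrix ℝ).mulVec alpha = lam0 • alpha)
    (hnorm : ∑ u, alpha u ^ 2 = (n : ℝ))
    (j : ℕ) (q : Polynomial ℝ)
    (hq : Polynomial.aeval (G.adjMatrix ℝ) q
      = Matrix.of (fun u v => if G.dist u v ≤ j then alpha u * alpha v else 0)) :
    q.eval lam0 = (n : ℝ) /
      ∑ u, ((alpha u ^ 2)⁻¹ * ∑ v, (if G.dist u v ≤ j then alpha v ^ 2 else 0))⁻¹ := by
  have hball : ∀ u, ∑ v, (if G.dist u v ≤ j then alpha v ^ 2 else 0) = q.eval lam0 := by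
    intro u
    have h := congrFun (aeval_mulVec_of_mulVec_eq_smul heig q) u
    rw [hq, of_ite_mul_mulVec, Pi.smul_apply, smul_eq_mul, mul_comm (q.eval lam0)] at h
    exact mul_left_cancel₀ (hpos u).ne' h
  have hn : (n : ℝ) ≠ 0 := by
    obtain ⟨u⟩ := hconn.nonempty
    exact Nat.cast_ne_zero.2 u.pos.ne'
  simp only [hball]
  rw [← hnorm] at hn ⊢
  exact (sum_div_sum_inv_inv_mul_const _ _ hn).symm
end

section
/- Let Γ be a connected graph with diameter D, adjacency matrix A, and Perron vector α with ‖α‖² = n. If p_{≥D}(A) = A*_D for some polynomial p_{≥D}, where A*_D is the weighted distance-D matrix with entries (A*_D)_{uv} = α_uα_v when dist(u,v) = D and 0 otherwise, then the numbers ‖ρ_{Γ_D(u)}‖² = Σ_{v: dist(u,v)=D} α_v² are the same for all vertices u, and their common value is p_{≥D}(λ_0). -/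
/-! Apply both sides of `p(A) = A*_D` to the eigenvector `α`: the left side gives `p(λ₀) α`, the
right side has `u`-entry `α u * ∑_{dist u v = D} α v ²`, and `α u > 0` can be cancelled. -/

open Matrix Finset Polynomial

theorem Matrix.aeval_mulVec_of_mulVec_eq_smul_s17 {R n : Type*} [CommRing R] [Fintype n]
    [DecidableEq n] {A : Matrix n n R} {v : n → R} {a : R} (h : A *ᵥ v = a • v) (p : R[X]) :
    aeval A p *ᵥ v = p.eval a • v := by
  have := Module.End.aeval_apply_of_mem_apply_eq_smul (f := toLinAlgEquiv' A) (p := p) h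
  rwa [aeval_algHom_apply] at this

theorem Matrix.of_ite_mul_mulVec_self_apply {R n : Type*} [CommSemiring R] [Fintype n]
    (r : n → n → Prop) [DecidableRel r] (w : n → R) (u : n) :
    ((of fun u v => if r u v then w u * w v else 0) *ᵥ w) u
      = w u * ∑ v, if r u v then w v ^ 2 else 0 := by
  simp only [mulVec, dotProduct, of_apply, Finset.mul_sum]
  refine Finset.sum_congr rfl fun v _ => ?_
  split_ifs <;> ring

theorem weighted_excess_constant_general
    (n D : ℕ) (G : SimpleGraph (Fin n)) [DecidableRel G.Adj]
    (lam0 : ℝ) (alpha : Fin n → ℝ) (hpos : ∀ u, 0 < alpha u)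
    (heig : (G.adjMatrix ℝ).mulVec alpha = lam0 • alpha)
    (p : Polynomial ℝ)
    (hp : Polynomial.aeval (G.adjMatrix ℝ) p
      = Matrix.of (fun u v => if G.dist u v = D then alpha u * alpha v else 0)) :
    ∀ u : Fin n, ∑ v, (if G.dist u v = D then alpha v ^ 2 else 0) = p.eval lam0 := by
  intro u
  have h := congrFun (congrArg (· *ᵥ alpha) hp) u
  simp only [aeval_mulVec_of_mulVec_eq_smul_s17 heig, of_ite_mul_mulVec_self_apply, Pi.smul_apply,
    smul_eq_mul] at h
  exact mul_left_cancel₀ (hpos u).ne' (h.symm.trans (mul_comm _ _))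

theorem weighted_excess_constant
    (n D : ℕ) (G : SimpleGraph (Fin n)) [DecidableRel G.Adj]
    (hconn : G.Connected)
    (hdiam : ∀ u v : Fin n, G.dist u v ≤ D)
    (hdiam' : ∃ u v : Fin n, G.dist u v = D)
    (lam0 : ℝ) (alpha : Fin n → ℝ) (hpos : ∀ u, 0 < alpha u)
    (heig : (G.adjMatrix ℝ).mulVec alpha = lam0 • alpha)
    (hnorm : ∑ u, alpha u ^ 2 = (n : ℝ))
    (p : Polynomial ℝ)
    (hp : Polynomial.aeval (G.adjMatrix ℝ) p
      = Matrix.of (fun u v => if G.dist u v = D then alpha u * alpha v else 0)) :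
    ∀ u : Fin n, ∑ v, (if G.dist u v = D then alpha v ^ 2 else 0) = p.eval lam0 :=
  weighted_excess_constant_general n D G lam0 alpha hpos heig p hp
end
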